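/- (Strong law of large numbers for stationary ergodic sequences) Let (V,v) be the pair of upper and lower probabilities on a measurable space (Ω,𝓕) generated by a nonempty set 𝒫 of finitely additive probabilities, assume V and v are continuous, and let Y = {Y_n}_{n∈ℕ} be a stochastic process of real-valued random variables that is uniformly bounded (there is M with |Y_n(ω)| ≤ M for all n, ω), stationary with respect to V, and ergodic, meaning that the shift τ(x_1,x_2,…) = (x_2,x_3,…) on ℝ^ℕ (with the product σ-algebra) is ergodic with respect to the pushforward capacity V_Y(C) = V(Y⁻¹(C)). Then there exists a constant c such that v({ω ∈ Ω : lim_{n→∞} (1/n) ∑_{k=1}^n Y_k(ω) = c}) = 1. If in addition V is concave, then c ∈ [∫_Ω Y_1 dv, ∫_Ω Y_1 dV], where the integrals are Choquet integrals with respect to v and V respectively. -/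

import Mathlib

/-!
Push the process forward to sequence space `ℕ → ℝ` with its shift. Stationarity makes the upper
probability `V_Y(C) = V(Y⁻¹ C)` shift-invariant on cylinders, hence, by the monotone class
theorem and the continuity of `V`, on all measurable sets. Cesàro averages of the push-forward of
one `P ∈ 𝒮` along the shift converge along an ultrafilter to a shift-invariant finitely additive
probability `Q ≤ V_Y`, which is countably additive because `V_Y` is continuous at `∅`, and
ergodic because `V_Y` is. Birkhoff's theorem for `Q` (from Garsia's maximal lemma) gives
convergence of the averages `Q`-a.s. to `c = ∫ x₀ dQ`. The divergence set is shift-invariant and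
`Q`-null, so the ergodicity of `V_Y` forces `V_Y` of it to vanish, i.e. `v` of the convergence
set is `1`. Finally `1 - V_Y(Cᶜ) ≤ Q(C) ≤ V_Y(C)` places `c` between the two Choquet integrals.
-/

open MeasureTheory Filter Topology Set

def IsFinAddProb {Ω : Type*} [MeasurableSpace Ω] (P : Set Ω → ℝ) : Prop :=
  P ∅ = 0 ∧ P Set.univ = 1 ∧
    (∀ A : Set Ω, MeasurableSet A → 0 ≤ P A ∧ P A ≤ 1) ∧
    (∀ A B : Set Ω, MeasurableSet A → MeasurableSet B → Disjoint A B →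
      P (A ∪ B) = P A + P B)

def IsCapacity {Ω : Type*} [MeasurableSpace Ω] (μ : Set Ω → ℝ) : Prop :=
  μ ∅ = 0 ∧ μ Set.univ = 1 ∧
    ∀ A B : Set Ω, MeasurableSet A → MeasurableSet B → A ⊆ B → μ A ≤ μ B

def ContBelow {Ω : Type*} [MeasurableSpace Ω] (μ : Set Ω → ℝ) : Prop :=
  ∀ A : ℕ → Set Ω, (∀ n, MeasurableSet (A n)) → Monotone A →
    Filter.Tendsto (fun n => μ (A n)) Filter.atTop (nhds (μ (⋃ n, A n)))

def ContAbove {Ω : Type*} [MeasurableSpace Ω] (μ : Set Ω → ℝ) : Prop :=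
  ∀ A : ℕ → Set Ω, (∀ n, MeasurableSet (A n)) → Antitone A →
    Filter.Tendsto (fun n => μ (A n)) Filter.atTop (nhds (μ (⋂ n, A n)))

def ContAtEmpty {Ω : Type*} [MeasurableSpace Ω] (μ : Set Ω → ℝ) : Prop :=
  ∀ A : ℕ → Set Ω, (∀ n, MeasurableSet (A n)) → Antitone A → (⋂ n, A n) = ∅ →
    Filter.Tendsto (fun n => μ (A n)) Filter.atTop (nhds 0)

def ContAtUniv {Ω : Type*} [MeasurableSpace Ω] (μ : Set Ω → ℝ) : Prop :=
  ∀ A : ℕ → Set Ω, (∀ n, MeasurableSet (A n)) → Monotone A → (⋃ n, A n) = Set.univ →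
    Filter.Tendsto (fun n => μ (A n)) Filter.atTop (nhds 1)

def conjCap {Ω : Type*} (μ : Set Ω → ℝ) (A : Set Ω) : ℝ := 1 - μ Aᶜ

noncomputable def choquet {Ω : Type*} (μ : Set Ω → ℝ) (ξ : Ω → ℝ) : ℝ :=
  (∫ t in Set.Ioi (0:ℝ), μ {ω | ξ ω ≥ t}) +
    (∫ t in Set.Iio (0:ℝ), (μ {ω | ξ ω ≥ t} - 1))

noncomputable def choquetE {Ω : Type*} (μ : Set Ω → ℝ) (ξ : Ω → EReal) : ℝ :=
  (∫ t in Set.Ioi (0:ℝ), μ {ω | (t : EReal) ≤ ξ ω}) +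
    (∫ t in Set.Iio (0:ℝ), (μ {ω | (t : EReal) ≤ ξ ω} - 1))

def UpperProbOf {Ω : Type*} [MeasurableSpace Ω] (𝒮 : Set (Set Ω → ℝ)) (V : Set Ω → ℝ) : Prop :=
  ∀ A : Set Ω, MeasurableSet A → V A = sSup ((fun P => P A) '' 𝒮)

def LowerProbOf {Ω : Type*} [MeasurableSpace Ω] (𝒮 : Set (Set Ω → ℝ)) (v : Set Ω → ℝ) : Prop :=
  ∀ A : Set Ω, MeasurableSet A → v A = sInf ((fun P => P A) '' 𝒮)

def ErgodicCap {Ω : Type*} [MeasurableSpace Ω] (μ : Set Ω → ℝ) (θ : Ω → Ω) : Prop :=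
  ∀ B : Set Ω, MeasurableSet B → θ ⁻¹' B = B →
    (μ B = 0 ∨ μ B = 1) ∧ (μ B = 0 ∨ μ Bᶜ = 0)

def PreservesCap {Ω : Type*} [MeasurableSpace Ω] (μ : Set Ω → ℝ) (θ : Ω → Ω) : Prop :=
  ∀ A : Set Ω, MeasurableSet A → μ (θ ⁻¹' A) = μ A

def IndepSigmaWrt {Ω : Type*} (μ : Set Ω → ℝ) (m₁ m₂ : MeasurableSpace Ω) : Prop :=
  ∀ A B : Set Ω, MeasurableSet[m₁] A → MeasurableSet[m₂] B → μ (A ∩ B) = μ A * μ B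

def StationaryCap {Ω : Type*} [MeasurableSpace Ω] (μ : Set Ω → ℝ) (Y : ℕ → Ω → ℝ) : Prop :=
  ∀ (n k : ℕ) (A : Set (Fin (k + 1) → ℝ)), MeasurableSet A →
    μ {ω | (fun i : Fin (k + 1) => Y (n + (i : ℕ)) ω) ∈ A} =
      μ {ω | (fun i : Fin (k + 1) => Y (n + 1 + (i : ℕ)) ω) ∈ A}

namespace IsFinAddProb

variable {X : Type*} [MeasurableSpace X] {P : Set X → ℝ}

lemma empty (hP : IsFinAddProb P) : P ∅ = 0 := hP.1

lemma univ (hP : IsFinAddProb P) : P univ = 1 := hP.2.1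

lemma nonneg (hP : IsFinAddProb P) {A : Set X} (hA : MeasurableSet A) : 0 ≤ P A :=
  (hP.2.2.1 A hA).1

lemma le_one (hP : IsFinAddProb P) {A : Set X} (hA : MeasurableSet A) : P A ≤ 1 :=
  (hP.2.2.1 A hA).2

lemma union (hP : IsFinAddProb P) {A B : Set X} (hA : MeasurableSet A) (hB : MeasurableSet B)
    (hAB : Disjoint A B) : P (A ∪ B) = P A + P B :=
  hP.2.2.2 A B hA hB hAB

lemma compl (hP : IsFinAddProb P) {A : Set X} (hA : MeasurableSet A) : P Aᶜ = 1 - P A := by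
  have := hP.union hA hA.compl disjoint_compl_right
  rw [union_compl_self, hP.univ] at this
  linarith

lemma mono (hP : IsFinAddProb P) {A B : Set X} (hA : MeasurableSet A) (hB : MeasurableSet B)
    (hAB : A ⊆ B) : P A ≤ P B := by
  have := hP.union hA (hB.diff hA) disjoint_sdiff_right
  rw [union_sdiff_cancel hAB] at this
  linarith [hP.nonneg (hB.diff hA)]

lemma map {Y : Type*} [MeasurableSpace Y] (hP : IsFinAddProb P) {f : X → Y}
    (hf : Measurable f) : IsFinAddProb (fun A : Set Y => P (f ⁻¹' A)) :=
  ⟨hP.1, hP.2.1, fun _ hA => hP.2.2.1 _ (hf hA),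
    fun _ _ hA hB hAB => hP.union (hf hA) (hf hB) (hAB.preimage f)⟩

lemma average {n : ℕ} (hn : n ≠ 0) {P : ℕ → Set X → ℝ} (hP : ∀ k, IsFinAddProb (P k)) :
    IsFinAddProb (fun A => (n : ℝ)⁻¹ * ∑ k ∈ Finset.range n, P k A) := by
  have hn' : (0 : ℝ) < n := by positivity
  refine ⟨by simp [fun k => (hP k).empty], by simp [fun k => (hP k).univ, hn'.ne'],
    fun A hA => ⟨?_, ?_⟩, fun A B hA hB hAB => ?_⟩
  · exact mul_nonneg (by positivity) (Finset.sum_nonneg fun k _ => (hP k).nonneg hA)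
  · rw [inv_mul_le_iff₀ hn']
    simpa using Finset.sum_le_sum fun k (_ : k ∈ Finset.range n) => (hP k).le_one hA
  · simp only [fun k => (hP k).union hA hB hAB, Finset.sum_add_distrib, mul_add]

lemma of_tendsto {ι : Type*} {F : Filter ι} [F.NeBot] {P : ι → Set X → ℝ} {Q : Set X → ℝ}
    (hP : ∀ᶠ i in F, IsFinAddProb (P i))
    (hPQ : ∀ A, MeasurableSet A → Tendsto (fun i => P i A) F (𝓝 (Q A))) :
    IsFinAddProb Q := by
  refine ⟨?_, ?_, fun A hA => ⟨?_, ?_⟩, fun A B hA hB hAB => ?_⟩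
  · exact tendsto_nhds_unique (hPQ _ .empty)
      (tendsto_const_nhds.congr' (hP.mono fun i hi => hi.empty.symm))
  · exact tendsto_nhds_unique (hPQ _ .univ)
      (tendsto_const_nhds.congr' (hP.mono fun i hi => hi.univ.symm))
  · exact ge_of_tendsto (hPQ A hA) (hP.mono fun i hi => hi.nonneg hA)
  · exact le_of_tendsto (hPQ A hA) (hP.mono fun i hi => hi.le_one hA)
  · refine tendsto_nhds_unique (hPQ _ (hA.union hB)) ?_
    exact ((hPQ A hA).add (hPQ B hB)).congr' (hP.mono fun i hi => (hi.union hA hB hAB).symm)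

end IsFinAddProb

section Envelopes

variable {Ω : Type*} [MeasurableSpace Ω] {𝒮 : Set (Set Ω → ℝ)} {V v : Set Ω → ℝ} {A : Set Ω}

lemma UpperProbOf.le (hV : UpperProbOf 𝒮 V) (hP : ∀ P ∈ 𝒮, IsFinAddProb P) {P : Set Ω → ℝ}
    (hP𝒮 : P ∈ 𝒮) (hA : MeasurableSet A) : P A ≤ V A := by
  rw [hV A hA]
  exact le_csSup ⟨1, by rintro _ ⟨Q, hQ, rfl⟩; exact (hP Q hQ).le_one hA⟩ ⟨P, hP𝒮, rfl⟩

lemma UpperProbOf.le_of_forall_le (hV : UpperProbOf 𝒮 V) (h𝒮 : 𝒮.Nonempty)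
    (hA : MeasurableSet A) {c : ℝ} (hc : ∀ P ∈ 𝒮, P A ≤ c) : V A ≤ c := by
  rw [hV A hA]
  exact csSup_le (h𝒮.image _) (by rintro _ ⟨P, hP, rfl⟩; exact hc P hP)

lemma LowerProbOf.le (hv : LowerProbOf 𝒮 v) (hP : ∀ P ∈ 𝒮, IsFinAddProb P) {P : Set Ω → ℝ}
    (hP𝒮 : P ∈ 𝒮) (hA : MeasurableSet A) : v A ≤ P A := by
  rw [hv A hA]
  exact csInf_le ⟨0, by rintro _ ⟨Q, hQ, rfl⟩; exact (hP Q hQ).nonneg hA⟩ ⟨P, hP𝒮, rfl⟩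

lemma LowerProbOf.le_of_forall_le (hv : LowerProbOf 𝒮 v) (h𝒮 : 𝒮.Nonempty)
    (hA : MeasurableSet A) {c : ℝ} (hc : ∀ P ∈ 𝒮, c ≤ P A) : c ≤ v A := by
  rw [hv A hA]
  exact le_csInf (h𝒮.image _) (by rintro _ ⟨P, hP, rfl⟩; exact hc P hP)

lemma UpperProbOf.isCapacity (hV : UpperProbOf 𝒮 V) (h𝒮 : 𝒮.Nonempty)
    (hP : ∀ P ∈ 𝒮, IsFinAddProb P) : IsCapacity V := by
  obtain ⟨P₀, hP₀⟩ := h𝒮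
  refine ⟨le_antisymm ?_ ?_, le_antisymm ?_ ?_, fun A B hA hB hAB => ?_⟩
  · exact hV.le_of_forall_le ⟨P₀, hP₀⟩ .empty fun P hP𝒮 => (hP P hP𝒮).empty.le
  · simpa [(hP P₀ hP₀).empty] using hV.le hP hP₀ .empty
  · exact hV.le_of_forall_le ⟨P₀, hP₀⟩ .univ fun P hP𝒮 => (hP P hP𝒮).le_one .univ
  · simpa [(hP P₀ hP₀).univ] using hV.le hP hP₀ .univ
  · exact hV.le_of_forall_le ⟨P₀, hP₀⟩ hA fun P hP𝒮 =>
      ((hP P hP𝒮).mono hA hB hAB).trans (hV.le hP hP𝒮 hB)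

lemma LowerProbOf.eq_conjCap (hv : LowerProbOf 𝒮 v) (hV : UpperProbOf 𝒮 V) (h𝒮 : 𝒮.Nonempty)
    (hP : ∀ P ∈ 𝒮, IsFinAddProb P) (hA : MeasurableSet A) : v A = conjCap V A := by
  refine le_antisymm ?_ (hv.le_of_forall_le h𝒮 hA fun P hP𝒮 => ?_)
  · have : V Aᶜ ≤ 1 - v A := hV.le_of_forall_le h𝒮 hA.compl fun P hP𝒮 => by
      rw [(hP P hP𝒮).compl hA]
      linarith [hv.le hP hP𝒮 hA]
    rw [conjCap]
    linarith
  · have := hV.le hP hP𝒮 hA.compl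
    rw [(hP P hP𝒮).compl hA] at this
    rw [conjCap]
    linarith

lemma LowerProbOf.eq_one_of_compl (hv : LowerProbOf 𝒮 v) (hV : UpperProbOf 𝒮 V)
    (h𝒮 : 𝒮.Nonempty) (hP : ∀ P ∈ 𝒮, IsFinAddProb P) (hA : MeasurableSet A) (hAc : V Aᶜ = 0) :
    v A = 1 := by
  rw [hv.eq_conjCap hV h𝒮 hP hA, conjCap, hAc, sub_zero]

end Envelopes

section Capacity

variable {X Y : Type*} [MeasurableSpace X] [MeasurableSpace Y] {μ : Set X → ℝ} {f : X → Y}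

lemma IsCapacity.map (hμ : IsCapacity μ) (hf : Measurable f) :
    IsCapacity (fun A : Set Y => μ (f ⁻¹' A)) :=
  ⟨hμ.1, hμ.2.1, fun _ _ hA hB hAB => hμ.2.2 _ _ (hf hA) (hf hB) (preimage_mono hAB)⟩

lemma IsCapacity.conjCap (hμ : IsCapacity μ) : IsCapacity (conjCap μ) := by
  refine ⟨by simp [_root_.conjCap, hμ.2.1], by simp [_root_.conjCap, hμ.1], fun A B hA hB hAB => ?_⟩
  have := hμ.2.2 _ _ hB.compl hA.compl (compl_subset_compl.2 hAB)
  simp only [_root_.conjCap]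
  linarith

lemma isCapacity_measureReal (Q : Measure X) [IsProbabilityMeasure Q] :
    IsCapacity (fun A => Q.real A) :=
  ⟨by simp, by simp, fun _ _ _ _ hAB => measureReal_mono hAB⟩

lemma ContBelow.map (hμ : ContBelow μ) (hf : Measurable f) :
    ContBelow (fun A : Set Y => μ (f ⁻¹' A)) := fun A hA hmono => by
  simpa only [preimage_iUnion] using
    hμ (fun n => f ⁻¹' A n) (fun n => hf (hA n)) fun _ _ h => preimage_mono (hmono h)

lemma ContAbove.map (hμ : ContAbove μ) (hf : Measurable f) :
    ContAbove (fun A : Set Y => μ (f ⁻¹' A)) := fun A hA hanti => by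
  simpa only [preimage_iInter] using
    hμ (fun n => f ⁻¹' A n) (fun n => hf (hA n)) fun _ _ h => preimage_mono (hanti h)

lemma ContAbove.contAtEmpty (hμ : ContAbove μ) (hμ0 : μ ∅ = 0) : ContAtEmpty μ :=
  fun A hA hanti hA0 => by simpa [hA0, hμ0] using hμ A hA hanti

end Capacity

section Choquet

lemma choquet_congr {X : Type*} {μ ν : Set X → ℝ} {ξ : X → ℝ}
    (h : ∀ t, μ {x | ξ x ≥ t} = ν {x | ξ x ≥ t}) : choquet μ ξ = choquet ν ξ := by
  simp only [choquet, h]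

lemma choquet_map {X Y : Type*} (μ : Set Y → ℝ) (f : Y → X) (ξ : X → ℝ) :
    choquet (fun C => μ (f ⁻¹' C)) ξ = choquet μ (ξ ∘ f) :=
  rfl

variable {X : Type*} [MeasurableSpace X] {μ ν : Set X → ℝ} {ξ : X → ℝ} {M : ℝ}

lemma IsCapacity.antitone_superlevel (hμ : IsCapacity μ) (hξ : Measurable ξ) :
    Antitone fun t => μ {x | ξ x ≥ t} := fun _ _ hst =>
  hμ.2.2 _ _ (measurableSet_le measurable_const hξ) (measurableSet_le measurable_const hξ)
    fun _ hx => le_trans hst hx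

lemma choquet_eq_setIntegral_Ioc (hμ : IsCapacity μ) (hξ : Measurable ξ)
    (hM : ∀ x, |ξ x| ≤ M) :
    choquet μ ξ = (∫ t in Ioc (-M) M, μ {x | ξ x ≥ t}) - M := by
  have hM0 : 0 ≤ M := by
    obtain ⟨x, -⟩ : (univ : Set X).Nonempty :=
      nonempty_iff_ne_empty.2 fun h => by simpa [h, hμ.1] using hμ.2.1
    exact (abs_nonneg _).trans (hM x)
  set F := fun t => μ {x | ξ x ≥ t}
  have hF : ∀ a b, IntervalIntegrable F volume a b := fun _ _ =>
    (hμ.antitone_superlevel hξ).intervalIntegrable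
  have hF0 : ∀ t, M < t → F t = 0 := fun t ht => by
    have : {x | ξ x ≥ t} = ∅ := eq_empty_of_forall_notMem fun x hx =>
      (lt_of_le_of_lt ((le_abs_self _).trans (hM x)) ht).not_ge hx
    simp only [F, this, hμ.1]
  have hF1 : ∀ t, t ≤ -M → F t = 1 := fun t ht => by
    have : {x | ξ x ≥ t} = univ := eq_univ_of_forall fun x =>
      ht.trans (neg_le_of_abs_le (hM x))
    simp only [F, this, hμ.2.1]
  have hpos : ∫ t in Ioi 0, F t = ∫ t in (0)..M, F t := by
    rw [intervalIntegral.integral_of_le hM0,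
      setIntegral_eq_of_subset_of_forall_sdiff_eq_zero measurableSet_Ioi Ioc_subset_Ioi_self]
    exact fun t ht => hF0 t (not_le.1 fun h => ht.2 ⟨ht.1, h⟩)
  have hneg : ∫ t in Iio 0, (F t - 1) = (∫ t in (-M)..0, F t) - M := by
    rw [setIntegral_eq_of_subset_of_forall_sdiff_eq_zero (s := Ioo (-M) 0) measurableSet_Iio
      Ioo_subset_Iio_self, ← integral_Ioc_eq_integral_Ioo,
      ← intervalIntegral.integral_of_le (by linarith),
      intervalIntegral.integral_sub (hF _ _) intervalIntegrable_const]
    · simp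
    · intro t ht
      rw [hF1 t (not_lt.1 fun h => ht.2 ⟨h, ht.1⟩), sub_self]
  change (∫ t in Ioi 0, F t) + ∫ t in Iio 0, (F t - 1) = (∫ t in Ioc (-M) M, F t) - M
  rw [hpos, hneg, ← intervalIntegral.integral_of_le (by linarith),
    ← intervalIntegral.integral_add_adjacent_intervals (hF (-M) 0) (hF 0 M)]
  ring

lemma choquet_mono (hμ : IsCapacity μ) (hν : IsCapacity ν) (hξ : Measurable ξ)
    (hM : ∀ x, |ξ x| ≤ M) (hμν : ∀ A, MeasurableSet A → μ A ≤ ν A) :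
    choquet μ ξ ≤ choquet ν ξ := by
  rw [choquet_eq_setIntegral_Ioc hμ hξ hM, choquet_eq_setIntegral_Ioc hν hξ hM,
    sub_le_sub_iff_right]
  exact setIntegral_mono_on (hμ.antitone_superlevel hξ).intervalIntegrable.1
    (hν.antitone_superlevel hξ).intervalIntegrable.1 measurableSet_Ioc
    fun t _ => hμν _ (measurableSet_le measurable_const hξ)

lemma integral_eq_choquet (Q : Measure X) [IsProbabilityMeasure Q] (hξ : Measurable ξ)
    (hM : ∀ x, |ξ x| ≤ M) : ∫ x, ξ x ∂Q = choquet (fun A => Q.real A) ξ := by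
  have hM0 : 0 ≤ M := (abs_nonneg _).trans (hM (nonempty_of_isProbabilityMeasure Q).some)
  have hξi : Integrable ξ Q :=
    Integrable.of_bound hξ.aestronglyMeasurable M (ae_of_all _ fun x => hM x)
  have hlayer := (hξi.add (integrable_const M)).integral_eq_integral_Ioc_meas_le
    (f := fun x => ξ x + M) (M := 2 * M)
    (ae_of_all _ fun x => show 0 ≤ ξ x + M by linarith [neg_le_of_abs_le (hM x)])
    (ae_of_all _ fun x => show ξ x + M ≤ 2 * M by linarith [le_of_abs_le (hM x)])
  have hshift : ∫ t in Ioc 0 (2 * M), Q.real {x | t ≤ ξ x + M} =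
      ∫ t in Ioc (-M) M, Q.real {x | ξ x ≥ t} := by
    rw [← intervalIntegral.integral_of_le (by linarith),
      ← intervalIntegral.integral_of_le (by linarith)]
    have := intervalIntegral.integral_comp_add_right
      (fun t => Q.real {x | t ≤ ξ x + M}) (a := -M) (b := M) M
    rw [neg_add_cancel, ← two_mul] at this
    simp_rw [← this, add_le_add_iff_right]
  rw [integral_add hξi (integrable_const M), hshift] at hlayer
  rw [choquet_eq_setIntegral_Ioc (isCapacity_measureReal Q) hξ hM, ← hlayer]
  simp

end Choquet

section MonotoneClass

variable {α : Type*} {𝒜 : Set (Set α)}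

inductive GenerateMonotoneClass (𝒜 : Set (Set α)) : Set α → Prop
  | basic {s : Set α} : s ∈ 𝒜 → GenerateMonotoneClass 𝒜 s
  | iUnion {f : ℕ → Set α} : Monotone f → (∀ n, GenerateMonotoneClass 𝒜 (f n)) →
      GenerateMonotoneClass 𝒜 (⋃ n, f n)
  | iInter {f : ℕ → Set α} : Antitone f → (∀ n, GenerateMonotoneClass 𝒜 (f n)) →
      GenerateMonotoneClass 𝒜 (⋂ n, f n)

namespace GenerateMonotoneClass

variable {s t : Set α}

lemma compl (h𝒜 : IsSetAlgebra 𝒜) (hs : GenerateMonotoneClass 𝒜 s) :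
    GenerateMonotoneClass 𝒜 sᶜ := by
  induction hs with
  | basic hs => exact basic (h𝒜.compl_mem hs)
  | iUnion hf _ ih =>
    rw [compl_iUnion]
    exact iInter (fun _ _ h => compl_subset_compl.2 (hf h)) ih
  | iInter hf _ ih =>
    rw [compl_iInter]
    exact iUnion (fun _ _ h => compl_subset_compl.2 (hf h)) ih

lemma union_of_mem (h𝒜 : IsSetAlgebra 𝒜) (hs : GenerateMonotoneClass 𝒜 s) (ht : t ∈ 𝒜) :
    GenerateMonotoneClass 𝒜 (s ∪ t) := by
  induction hs with
  | basic hs => exact basic (h𝒜.union_mem hs ht)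
  | iUnion hf _ ih =>
    rw [iUnion_union]
    exact iUnion (fun _ _ h => union_subset_union_left t (hf h)) ih
  | iInter hf _ ih =>
    rw [iInter_union]
    exact iInter (fun _ _ h => union_subset_union_left t (hf h)) ih

lemma union (h𝒜 : IsSetAlgebra 𝒜) (hs : GenerateMonotoneClass 𝒜 s)
    (ht : GenerateMonotoneClass 𝒜 t) : GenerateMonotoneClass 𝒜 (s ∪ t) := by
  induction ht with
  | basic ht => exact hs.union_of_mem h𝒜 ht
  | iUnion hf _ ih =>
    rw [union_iUnion]
    exact iUnion (fun _ _ h => union_subset_union_right s (hf h)) ih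
  | iInter hf _ ih =>
    rw [union_iInter]
    exact iInter (fun _ _ h => union_subset_union_right s (hf h)) ih

lemma accumulate (h𝒜 : IsSetAlgebra 𝒜) {f : ℕ → Set α}
    (hf : ∀ n, GenerateMonotoneClass 𝒜 (f n)) (n : ℕ) :
    GenerateMonotoneClass 𝒜 (Set.accumulate f n) := by
  induction n with
  | zero => simpa [accumulate_zero_nat] using hf 0
  | succ n ih => simpa [accumulate_succ] using ih.union h𝒜 (hf (n + 1))

end GenerateMonotoneClass

theorem MeasureTheory.IsSetAlgebra.monotoneClass_induction (h𝒜 : IsSetAlgebra 𝒜)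
    {p : Set α → Prop} (basic : ∀ s ∈ 𝒜, p s)
    (iUnion : ∀ f : ℕ → Set α, Monotone f → (∀ n, p (f n)) → p (⋃ n, f n))
    (iInter : ∀ f : ℕ → Set α, Antitone f → (∀ n, p (f n)) → p (⋂ n, f n))
    {s : Set α} (hs : MeasurableSet[MeasurableSpace.generateFrom 𝒜] s) : p s := by
  let m : MeasurableSpace α :=
    { MeasurableSet' := GenerateMonotoneClass 𝒜
      measurableSet_empty := .basic h𝒜.empty_mem
      measurableSet_compl := fun _ hs => hs.compl h𝒜
      measurableSet_iUnion := fun f hf => by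
        rw [← iUnion_accumulate]
        exact .iUnion monotone_accumulate (GenerateMonotoneClass.accumulate h𝒜 hf) }
  have hm : GenerateMonotoneClass 𝒜 s :=
    MeasurableSpace.generateFrom_le (m := m) (fun _ ht => .basic ht) s hs
  clear hs
  induction hm with
  | basic hs => exact basic _ hs
  | iUnion hf _ ih => exact iUnion _ hf ih
  | iInter hf _ ih => exact iInter _ hf ih

theorem MeasureTheory.IsSetAlgebra.eq_of_contBelow_of_contAbove [m : MeasurableSpace α]
    (h𝒜 : IsSetAlgebra 𝒜) (hgen : m = MeasurableSpace.generateFrom 𝒜) {μ ν : Set α → ℝ}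
    (hμb : ContBelow μ) (hμa : ContAbove μ) (hνb : ContBelow ν) (hνa : ContAbove ν)
    (h : ∀ s ∈ 𝒜, μ s = ν s) {s : Set α} (hs : MeasurableSet s) : μ s = ν s := by
  rw [hgen] at hs
  refine (h𝒜.monotoneClass_induction (p := fun s => MeasurableSet s ∧ μ s = ν s)
    (fun s hs => ⟨hgen ▸ .basic s hs, h s hs⟩) (fun f hf hfp => ⟨.iUnion fun n => (hfp n).1, ?_⟩)
    (fun f hf hfp => ⟨.iInter fun n => (hfp n).1, ?_⟩) hs).2
  · exact tendsto_nhds_unique ((hμb f (fun n => (hfp n).1) hf).congr fun n => (hfp n).2)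
      (hνb f (fun n => (hfp n).1) hf)
  · exact tendsto_nhds_unique ((hμa f (fun n => (hfp n).1) hf).congr fun n => (hfp n).2)
      (hνa f (fun n => (hfp n).1) hf)

end MonotoneClass

section MaximalErgodic

variable {X : Type*} {T : X → X} {f : X → ℝ} {C : ℝ}

/-- `maxBirkhoffSum T f N x = max_{0 ≤ n ≤ N} birkhoffSum T f n x`. -/
noncomputable def maxBirkhoffSum (T : X → X) (f : X → ℝ) : ℕ → X → ℝ
  | 0 => 0
  | N + 1 => fun x => max 0 (f x + maxBirkhoffSum T f N (T x))

namespace maxBirkhoffSum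

lemma nonneg (N : ℕ) (x : X) : 0 ≤ maxBirkhoffSum T f N x := by
  cases N with
  | zero => exact le_rfl
  | succ N => exact le_max_left _ _

lemma le_succ (N : ℕ) (x : X) : maxBirkhoffSum T f N x ≤ maxBirkhoffSum T f (N + 1) x := by
  induction N generalizing x with
  | zero => exact le_max_left _ _
  | succ N ih => exact max_le_max le_rfl (add_le_add_right (ih (T x)) _)

lemma birkhoffSum_le {n N : ℕ} (hnN : n ≤ N) (x : X) :
    birkhoffSum T f n x ≤ maxBirkhoffSum T f N x := by
  induction n generalizing N x with
  | zero => simpa using nonneg N x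
  | succ n ih =>
    obtain ⟨N, rfl⟩ : ∃ N', N = N' + 1 := ⟨N - 1, by omega⟩
    rw [birkhoffSum_succ']
    exact (add_le_add_right (ih (by omega) (T x)) _).trans (le_max_right _ _)

lemma measurable [MeasurableSpace X] (hT : Measurable T) (hf : Measurable f) (N : ℕ) :
    Measurable (maxBirkhoffSum T f N) := by
  induction N with
  | zero => exact measurable_const
  | succ N ih => exact measurable_const.max (hf.add (ih.comp hT))

lemma le_mul (hC : ∀ x, |f x| ≤ C) (N : ℕ) (x : X) : maxBirkhoffSum T f N x ≤ N * C := by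
  induction N generalizing x with
  | zero => simp [maxBirkhoffSum]
  | succ N ih =>
    refine max_le (mul_nonneg (by positivity) ((abs_nonneg _).trans (hC x))) ?_
    push_cast
    linarith [ih (T x), le_of_abs_le (hC x)]

end maxBirkhoffSum

variable [MeasurableSpace X] {μ : Measure X} [IsFiniteMeasure μ]

lemma integrable_maxBirkhoffSum (hT : Measurable T) (hf : Measurable f) (hC : ∀ x, |f x| ≤ C)
    (N : ℕ) : Integrable (maxBirkhoffSum T f N) μ :=
  .of_bound (maxBirkhoffSum.measurable hT hf N).aestronglyMeasurable (N * C)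
    (ae_of_all _ fun x => by
      rw [Real.norm_eq_abs, abs_of_nonneg (maxBirkhoffSum.nonneg N x)]
      exact maxBirkhoffSum.le_mul hC N x)

lemma setIntegral_maxBirkhoffSum_nonneg (hT : MeasurePreserving T μ μ) (hf : Measurable f)
    (hC : ∀ x, |f x| ≤ C) (N : ℕ) :
    0 ≤ ∫ x in {x | 0 ≤ f x + maxBirkhoffSum T f N (T x)}, f x ∂μ := by
  set Φ := maxBirkhoffSum T f (N + 1)
  set E := {x | 0 ≤ f x + maxBirkhoffSum T f N (T x)}
  have hE : MeasurableSet E := measurableSet_le measurable_const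
    (hf.add ((maxBirkhoffSum.measurable hT.measurable hf N).comp hT.measurable))
  have hΦ : Integrable Φ μ := integrable_maxBirkhoffSum hT.measurable hf hC _
  have hΦT : Integrable (fun x => Φ (T x)) μ := hT.integrable_comp_of_integrable hΦ
  -- On `E`, `Φ = f + Φ_N ∘ T ≤ f + Φ ∘ T`; off `E`, `Φ = 0`.
  have hle : ∫ x in E, (Φ x - Φ (T x)) ∂μ ≤ ∫ x in E, f x ∂μ :=
    setIntegral_mono_on (hΦ.sub hΦT).integrableOn
      (Integrable.of_bound hf.aestronglyMeasurable C (ae_of_all _ hC)).integrableOn hE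
      fun x hx => by
        have : Φ x = f x + maxBirkhoffSum T f N (T x) := max_eq_right hx
        linarith [maxBirkhoffSum.le_succ (T := T) (f := f) N (T x)]
  have hoff : ∫ x in E, Φ x ∂μ = ∫ x, Φ x ∂μ :=
    setIntegral_eq_integral_of_forall_compl_eq_zero fun x hx =>
      max_eq_left (le_of_lt (not_le.1 hx))
  have hsub : ∫ x in E, Φ (T x) ∂μ ≤ ∫ x, Φ (T x) ∂μ :=
    setIntegral_le_integral hΦT (ae_of_all _ fun x => maxBirkhoffSum.nonneg _ _)
  have hinv : ∫ x, Φ (T x) ∂μ = ∫ x, Φ x ∂μ := by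
    have hΦm : AEStronglyMeasurable Φ (μ.map T) := by
      rw [hT.map_eq]
      exact hΦ.aestronglyMeasurable
    rw [← integral_map hT.measurable.aemeasurable hΦm, hT.map_eq]
  rw [integral_sub hΦ.integrableOn hΦT.integrableOn, hoff] at hle
  linarith

/-- Garsia's maximal ergodic lemma. -/
theorem integral_nonneg_of_ae_exists_birkhoffSum_nonneg (hT : MeasurePreserving T μ μ)
    (hf : Measurable f) (hC : ∀ x, |f x| ≤ C) (h : ∀ᵐ x ∂μ, ∃ n, 0 ≤ birkhoffSum T f (n + 1) x) :
    0 ≤ ∫ x, f x ∂μ := by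
  set E : ℕ → Set X := fun N => {x | 0 ≤ f x + maxBirkhoffSum T f N (T x)}
  have hE : ∀ N, MeasurableSet (E N) := fun N => measurableSet_le measurable_const
    (hf.add ((maxBirkhoffSum.measurable hT.measurable hf N).comp hT.measurable))
  have hEmono : Monotone E := monotone_nat_of_le_succ fun N x hx =>
    hx.trans (add_le_add_right (maxBirkhoffSum.le_succ N (T x)) _)
  have hEfull : μ.restrict (⋃ N, E N) = μ := Measure.restrict_eq_self_of_ae_mem <|
    h.mono fun x ⟨n, hn⟩ => mem_iUnion.2 ⟨n, by
      rw [birkhoffSum_succ'] at hn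
      exact hn.trans (add_le_add_right (maxBirkhoffSum.birkhoffSum_le le_rfl (T x)) _)⟩
  rw [← hEfull]
  exact ge_of_tendsto (tendsto_setIntegral_of_monotone hE hEmono
    (Integrable.of_bound hf.aestronglyMeasurable C (ae_of_all _ hC)).integrableOn)
    (Eventually.of_forall fun N => setIntegral_maxBirkhoffSum_nonneg hT hf hC N)

end MaximalErgodic

section Birkhoff

lemma limsup_le_limsup_of_tendsto_sub {u v : ℕ → ℝ} {C : ℝ} (hu : ∀ n, |u n| ≤ C)
    (hv : ∀ n, |v n| ≤ C) (huv : Tendsto (fun n => u n - v n) atTop (𝓝 0)) :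
    limsup u atTop ≤ limsup v atTop := by
  have huv' : ∀ n, |(u - v) n| ≤ C + C := fun n =>
    (abs_sub _ _).trans (add_le_add (hu n) (hv n))
  calc limsup u atTop = limsup (v + (u - v)) atTop := by simp
    _ ≤ limsup v atTop + limsup (u - v) atTop :=
      limsup_add_le (isBoundedUnder_of ⟨-C, fun n => neg_le_of_abs_le (hv n)⟩)
        (isBoundedUnder_of ⟨C, fun n => le_of_abs_le (hv n)⟩)
        (isCoboundedUnder_le_of_le atTop fun n => neg_le_of_abs_le (huv' n))
        (isBoundedUnder_of ⟨C + C, fun n => le_of_abs_le (huv' n)⟩)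
    _ = limsup v atTop := by
      have : limsup (u - v) atTop = 0 := huv.limsup_eq
      rw [this, add_zero]

variable {X : Type*} {T : X → X} {g : X → ℝ} {C : ℝ}

lemma abs_birkhoffAverage_le (hC : ∀ x, |g x| ≤ C) (n : ℕ) (x : X) :
    |birkhoffAverage ℝ T g n x| ≤ C := by
  rcases Nat.eq_zero_or_pos n with rfl | hn
  · simpa using (abs_nonneg _).trans (hC x)
  rw [birkhoffAverage, birkhoffSum, smul_eq_mul, abs_mul, abs_inv, Nat.abs_cast,
    inv_mul_le_iff₀ (by positivity)]
  calc |∑ k ∈ Finset.range n, g (T^[k] x)| ≤ ∑ k ∈ Finset.range n, |g (T^[k] x)| :=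
        Finset.abs_sum_le_sum_abs _ _
    _ ≤ n * C := by simpa using Finset.sum_le_sum fun k (_ : k ∈ Finset.range n) => hC (T^[k] x)

lemma birkhoffSum_sub_const (a : ℝ) (n : ℕ) (x : X) :
    birkhoffSum T (fun y => g y - a) n x = n * (birkhoffAverage ℝ T g n x - a) := by
  rcases Nat.eq_zero_or_pos n with rfl | hn
  · simp
  simp [birkhoffAverage, birkhoffSum, Finset.sum_sub_distrib, mul_sub, hn.ne']

lemma tendsto_birkhoffAverage_apply_sub (hC : ∀ x, |g x| ≤ C) (x : X) :
    Tendsto (fun n => birkhoffAverage ℝ T g n (T x) - birkhoffAverage ℝ T g n x) atTop (𝓝 0) :=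
  tendsto_birkhoffAverage_apply_sub_birkhoffAverage' ℝ
    (isBounded_iff_forall_norm_le.2 ⟨C, by rintro _ ⟨y, rfl⟩; exact hC y⟩) T x

lemma preimage_setOf_tendsto_birkhoffAverage (hC : ∀ x, |g x| ≤ C) (c : ℝ) :
    T ⁻¹' {x | Tendsto (birkhoffAverage ℝ T g · x) atTop (𝓝 c)} =
      {x | Tendsto (birkhoffAverage ℝ T g · x) atTop (𝓝 c)} := by
  ext x
  have h := tendsto_birkhoffAverage_apply_sub (T := T) hC x
  exact ⟨fun hx => by simpa using hx.sub h, fun hx => by simpa using hx.add h⟩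

lemma limsup_birkhoffAverage_apply (hC : ∀ x, |g x| ≤ C) (x : X) :
    limsup (birkhoffAverage ℝ T g · (T x)) atTop = limsup (birkhoffAverage ℝ T g · x) atTop :=
  le_antisymm
    (limsup_le_limsup_of_tendsto_sub (abs_birkhoffAverage_le hC · _)
      (abs_birkhoffAverage_le hC · _) (tendsto_birkhoffAverage_apply_sub hC x))
    (limsup_le_limsup_of_tendsto_sub (abs_birkhoffAverage_le hC · _)
      (abs_birkhoffAverage_le hC · _) (by simpa using (tendsto_birkhoffAverage_apply_sub hC x).neg))

variable [MeasurableSpace X]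

lemma measurable_birkhoffAverage (hT : Measurable T) (hg : Measurable g) (n : ℕ) :
    Measurable (birkhoffAverage ℝ T g n) := by
  have := fun k => hg.comp (hT.iterate k)
  unfold birkhoffAverage birkhoffSum
  fun_prop

lemma le_integral_of_ae_lt_limsup_birkhoffAverage {μ : Measure X} [IsProbabilityMeasure μ]
    (hT : MeasurePreserving T μ μ) (hg : Measurable g) (hC : ∀ x, |g x| ≤ C) {a : ℝ}
    (h : ∀ᵐ x ∂μ, a < limsup (birkhoffAverage ℝ T g · x) atTop) : a ≤ ∫ x, g x ∂μ := by
  have hS : ∀ᵐ x ∂μ, ∃ n, 0 ≤ birkhoffSum T (fun y => g y - a) (n + 1) x := h.mono fun x hx => by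
    have hfreq := frequently_lt_of_lt_limsup (isCoboundedUnder_le_of_le atTop fun n =>
      neg_le_of_abs_le (abs_birkhoffAverage_le hC n x)) hx
    obtain ⟨n, hn, hn0⟩ := (hfreq.and_eventually (eventually_ne_atTop 0)).exists
    obtain ⟨m, rfl⟩ := Nat.exists_eq_add_one_of_ne_zero hn0
    exact ⟨m, birkhoffSum_sub_const (T := T) a (m + 1) x ▸
      mul_nonneg (by positivity) (sub_nonneg.2 hn.le)⟩
  have hint := integral_nonneg_of_ae_exists_birkhoffSum_nonneg hT (f := fun y => g y - a)
    (hg.sub measurable_const) (C := C + |a|) (fun x => (abs_sub _ _).trans (by linarith [hC x])) hS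
  rw [integral_sub (.of_bound hg.aestronglyMeasurable C (ae_of_all _ hC)) (integrable_const a),
    integral_const] at hint
  simpa using hint

theorem ae_limsup_birkhoffAverage_le {μ : Measure X} [IsProbabilityMeasure μ] (hT : Ergodic T μ)
    (hg : Measurable g) (hC : ∀ x, |g x| ≤ C) :
    ∀ᵐ x ∂μ, limsup (birkhoffAverage ℝ T g · x) atTop ≤ ∫ x, g x ∂μ := by
  set L := fun x => limsup (birkhoffAverage ℝ T g · x) atTop
  have hL : Measurable L := .limsup (measurable_birkhoffAverage hT.measurable hg)
  obtain ⟨c, hc⟩ := hT.toPreErgodic.ae_eq_const_of_ae_eq_comp hL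
    (funext (limsup_birkhoffAverage_apply hC))
  have hcle : c ≤ ∫ x, g x ∂μ := le_of_forall_pos_le_add fun ε hε => by
    linarith [le_integral_of_ae_lt_limsup_birkhoffAverage hT.toMeasurePreserving hg hC
      (a := c - ε) (hc.mono fun x (hx : L x = c) => hx ▸ sub_lt_self c hε)]
  filter_upwards [hc] with x hx using hx.trans_le hcle

theorem ae_tendsto_birkhoffAverage {μ : Measure X} [IsProbabilityMeasure μ] (hT : Ergodic T μ)
    (hg : Measurable g) (hC : ∀ x, |g x| ≤ C) :
    ∀ᵐ x ∂μ, Tendsto (birkhoffAverage ℝ T g · x) atTop (𝓝 (∫ x, g x ∂μ)) := by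
  filter_upwards [ae_limsup_birkhoffAverage_le hT hg hC,
    ae_limsup_birkhoffAverage_le hT hg.neg (g := -g) (by simpa using hC)] with x hx hx'
  simp only [Pi.neg_apply, integral_neg, birkhoffAverage_neg] at hx'
  have hb : ∀ n, |birkhoffAverage ℝ T g n x| ≤ C := fun n => abs_birkhoffAverage_le hC n x
  refine tendsto_order.2 ⟨fun a ha => ?_, fun a ha => eventually_lt_of_limsup_lt (hx.trans_lt ha)
    (isBoundedUnder_of ⟨C, fun n => le_of_abs_le (hb n)⟩)⟩
  exact (eventually_lt_of_limsup_lt (hx'.trans_lt (neg_lt_neg ha))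
    (isBoundedUnder_of ⟨C, fun n => (neg_le_abs _).trans (hb n)⟩)).mono fun n hn =>
      neg_lt_neg_iff.1 hn

end Birkhoff

section InvariantMeasure

variable {X : Type*} [MeasurableSpace X] {T : X → X} {P W : Set X → ℝ}

lemma PreservesCap.iterate (hW : PreservesCap W T) (hT : Measurable T) (k : ℕ) :
    PreservesCap W T^[k] := by
  induction k with
  | zero => exact fun A _ => rfl
  | succ k ih =>
    intro A hA
    rw [Function.iterate_succ, preimage_comp, hW _ (hT.iterate k hA), ih A hA]

lemma tendsto_limUnder_of_eventually_mem_Icc {ι : Type*} (𝔘 : Ultrafilter ι) {u : ι → ℝ}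
    {a b : ℝ} (h : ∀ᶠ i in (𝔘 : Filter ι), u i ∈ Icc a b) :
    Tendsto u 𝔘 (𝓝 (limUnder (𝔘 : Filter ι) u)) := by
  obtain ⟨L, -, hL⟩ := isCompact_Icc.ultrafilter_le_nhds (𝔘.map u) (le_principal_iff.2 h)
  exact tendsto_nhds_limUnder ⟨L, hL⟩

theorem IsFinAddProb.exists_measure_of_le (hP : IsFinAddProb P)
    (hPW : ∀ A, MeasurableSet A → P A ≤ W A) (hW : ContAtEmpty W) :
    ∃ Q : Measure X, IsProbabilityMeasure Q ∧ ∀ A, MeasurableSet A → Q.real A = P A := by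
  have hC : IsSetRing {A : Set X | MeasurableSet A} :=
    ⟨.empty, fun _ _ => .union, fun _ _ => .diff⟩
  let m := hC.addContent_of_union (fun A => ENNReal.ofReal (P A)) (by simp [hP.empty])
    fun hA hB hAB => by rw [hP.union hA hB hAB, ENNReal.ofReal_add (hP.nonneg hA) (hP.nonneg hB)]
  have hσ : ∀ ⦃f : ℕ → Set X⦄, (∀ i, MeasurableSet (f i)) → Pairwise (Function.onFun Disjoint f) →
      ENNReal.ofReal (P (⋃ i, f i)) = ∑' i, ENNReal.ofReal (P (f i)) := fun f hf hd =>
    addContent_iUnion_eq_sum_of_tendsto_zero hC m (fun s _ => (ENNReal.ofReal_ne_top : m s ≠ ⊤))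
      (fun s hs hanti hs0 => show Tendsto (fun n => ENNReal.ofReal (P (s n))) atTop (𝓝 0) by
        simpa using ENNReal.tendsto_ofReal (squeeze_zero (fun n => hP.nonneg (hs n))
          (fun n => hPW _ (hs n)) (hW s hs hanti hs0)))
      hf (.iUnion hf) hd
  let Q := Measure.ofMeasurable (fun A _ => ENNReal.ofReal (P A)) (by simp [hP.empty]) hσ
  have hQ : ∀ A, MeasurableSet A → Q A = ENNReal.ofReal (P A) := Measure.ofMeasurable_apply
  refine ⟨Q, ⟨by rw [hQ _ .univ, hP.univ, ENNReal.ofReal_one]⟩, fun A hA => ?_⟩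
  rw [measureReal_def, hQ A hA, ENNReal.toReal_ofReal (hP.nonneg hA)]

/-- Krylov–Bogolyubov, with the limit of Cesàro averages taken along an ultrafilter. -/
theorem exists_invariant_measure_le (hT : Measurable T) (hP : IsFinAddProb P)
    (hPW : ∀ A, MeasurableSet A → P A ≤ W A) (hWT : PreservesCap W T) (hW : ContAtEmpty W) :
    ∃ Q : Measure X, IsProbabilityMeasure Q ∧ MeasurePreserving T Q Q ∧
      ∀ A, MeasurableSet A → Q.real A ≤ W A := by
  set Pn : ℕ → Set X → ℝ := birkhoffAverage ℝ (preimage T) P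
  have hPn_eq : ∀ n, Pn n = fun A => (n : ℝ)⁻¹ * ∑ k ∈ Finset.range n, P (T^[k] ⁻¹' A) :=
    fun n => by ext A; simp [Pn, birkhoffAverage, birkhoffSum, preimage_iterate_eq]
  have hPn : ∀ n ≠ 0, IsFinAddProb (Pn n) := fun n hn => by
    rw [hPn_eq]
    exact IsFinAddProb.average hn fun k => hP.map (hT.iterate k)
  have hPnW : ∀ n ≠ 0, ∀ A, MeasurableSet A → Pn n A ≤ W A := fun n hn A hA => by
    rw [hPn_eq, inv_mul_le_iff₀ (by positivity)]
    simpa using Finset.sum_le_sum fun k (_ : k ∈ Finset.range n) =>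
      (hPW _ (hT.iterate k hA)).trans_eq (hWT.iterate hT k A hA)
  have hPnT : ∀ A, MeasurableSet A → Tendsto (fun n => Pn n (T ⁻¹' A) - Pn n A) atTop (𝓝 0) := by
    intro A hA
    refine squeeze_zero_norm (fun n => ?_) tendsto_inv_atTop_nhds_zero_nat
    rw [birkhoffAverage_apply_sub_birkhoffAverage, ← preimage_iterate_eq, smul_eq_mul,
      norm_mul, norm_inv, RCLike.norm_natCast]
    refine mul_le_of_le_one_right (by positivity) (abs_sub_le_iff.2 ⟨?_, ?_⟩) <;>
      linarith [hP.nonneg hA, hP.le_one hA, hP.nonneg (hT.iterate n hA),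
        hP.le_one (hT.iterate n hA)]
  set 𝔘 := Ultrafilter.of (atTop : Filter ℕ)
  have h𝔘 : ∀ᶠ n in (𝔘 : Filter ℕ), n ≠ 0 := Ultrafilter.of_le atTop (eventually_ne_atTop 0)
  set Q₀ : Set X → ℝ := fun A => limUnder (𝔘 : Filter ℕ) (Pn · A)
  have hQ₀ : ∀ A, MeasurableSet A → Tendsto (Pn · A) 𝔘 (𝓝 (Q₀ A)) := fun A hA =>
    tendsto_limUnder_of_eventually_mem_Icc 𝔘
      (h𝔘.mono fun n hn => ⟨(hPn n hn).nonneg hA, (hPn n hn).le_one hA⟩)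
  have hQ₀W : ∀ A, MeasurableSet A → Q₀ A ≤ W A := fun A hA =>
    le_of_tendsto (hQ₀ A hA) (h𝔘.mono fun n hn => hPnW n hn A hA)
  have hQ₀T : ∀ A, MeasurableSet A → Q₀ (T ⁻¹' A) = Q₀ A := fun A hA =>
    tendsto_nhds_unique (hQ₀ _ (hT hA)) <| by
      simpa using (hQ₀ A hA).add ((hPnT A hA).mono_left (Ultrafilter.of_le _))
  obtain ⟨Q, hQ, hQQ₀⟩ := (IsFinAddProb.of_tendsto (h𝔘.mono hPn) hQ₀).exists_measure_of_le hQ₀W hW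
  refine ⟨Q, hQ, ⟨hT, Measure.ext fun A hA => ?_⟩, fun A hA => (hQQ₀ A hA).trans_le (hQ₀W A hA)⟩
  rw [Measure.map_apply hT hA, ← ENNReal.toReal_eq_toReal_iff' (measure_ne_top _ _)
    (measure_ne_top _ _)]
  exact (hQQ₀ _ (hT hA)).trans ((hQ₀T A hA).trans (hQQ₀ A hA).symm)

end InvariantMeasure

section ErgodicCapacity

variable {X : Type*} [MeasurableSpace X] {T : X → X} {W : Set X → ℝ} {Q : Measure X}
  [IsProbabilityMeasure Q]

lemma measure_eq_zero_of_capacity_eq_zero (hQW : ∀ A, MeasurableSet A → Q.real A ≤ W A)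
    {A : Set X} (hA : MeasurableSet A) (hWA : W A = 0) : Q A = 0 :=
  (measureReal_eq_zero_iff).1 (le_antisymm (hWA ▸ hQW A hA) measureReal_nonneg)

lemma ErgodicCap.ergodic (herg : ErgodicCap W T) (hT : MeasurePreserving T Q Q)
    (hQW : ∀ A, MeasurableSet A → Q.real A ≤ W A) : Ergodic T Q :=
  ⟨hT, ⟨fun s hs hTs => eventuallyConst_set'.2 <| by
    rw [ae_eq_empty, ae_eq_univ]
    exact (herg s hs hTs).2.imp (measure_eq_zero_of_capacity_eq_zero hQW hs)
      (measure_eq_zero_of_capacity_eq_zero hQW hs.compl)⟩⟩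

lemma ErgodicCap.eq_zero_of_measure_eq_zero (herg : ErgodicCap W T)
    (hQW : ∀ A, MeasurableSet A → Q.real A ≤ W A) {B : Set X} (hB : MeasurableSet B)
    (hTB : T ⁻¹' B = B) (hQB : Q B = 0) : W B = 0 :=
  (herg B hB hTB).2.resolve_right fun h => by
    have := (prob_compl_eq_zero_iff hB).1 (measure_eq_zero_of_capacity_eq_zero hQW hB.compl h)
    simp [hQB] at this

theorem ErgodicCap.capacity_not_tendsto_birkhoffAverage_eq_zero (herg : ErgodicCap W T)
    (hT : MeasurePreserving T Q Q) (hQW : ∀ A, MeasurableSet A → Q.real A ≤ W A)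
    {g : X → ℝ} {C : ℝ} (hg : Measurable g) (hC : ∀ x, |g x| ≤ C) :
    W {x | ¬Tendsto (birkhoffAverage ℝ T g · x) atTop (𝓝 (∫ x, g x ∂Q))} = 0 := by
  have hN : MeasurableSet {x | Tendsto (birkhoffAverage ℝ T g · x) atTop (𝓝 (∫ x, g x ∂Q))} :=
    measurableSet_tendsto _ (measurable_birkhoffAverage hT.measurable hg)
  refine herg.eq_zero_of_measure_eq_zero hQW hN.compl
    (by rw [← compl_ofPred, preimage_compl, preimage_setOf_tendsto_birkhoffAverage hC]) ?_
  exact ae_iff.1 (ae_tendsto_birkhoffAverage (herg.ergodic hT hQW) hg hC)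

variable {ξ : X → ℝ} {M : ℝ}

lemma choquet_conjCap_le_integral (hW : IsCapacity W) (hQW : ∀ A, MeasurableSet A → Q.real A ≤ W A)
    (hξ : Measurable ξ) (hM : ∀ x, |ξ x| ≤ M) : choquet (conjCap W) ξ ≤ ∫ x, ξ x ∂Q := by
  rw [integral_eq_choquet Q hξ hM]
  refine choquet_mono hW.conjCap (isCapacity_measureReal Q) hξ hM fun A hA => ?_
  have := hQW _ hA.compl
  rw [probReal_compl_eq_one_sub hA] at this
  rw [conjCap]
  linarith

lemma integral_le_choquet (hW : IsCapacity W) (hQW : ∀ A, MeasurableSet A → Q.real A ≤ W A)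
    (hξ : Measurable ξ) (hM : ∀ x, |ξ x| ≤ M) : ∫ x, ξ x ∂Q ≤ choquet W ξ := by
  rw [integral_eq_choquet Q hξ hM]
  exact choquet_mono (isCapacity_measureReal Q) hW hξ hM hQW

lemma integral_mem_Icc_choquet_comp {Ω : Type*} [MeasurableSpace Ω] {V v : Set Ω → ℝ}
    {F : Ω → X} (hV : IsCapacity V) (hF : Measurable F)
    (hv : ∀ A, MeasurableSet A → v A = conjCap V A)
    (hQV : ∀ A, MeasurableSet A → Q.real A ≤ V (F ⁻¹' A)) (hξ : Measurable ξ)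
    (hM : ∀ x, |ξ x| ≤ M) : ∫ x, ξ x ∂Q ∈ Icc (choquet v (ξ ∘ F)) (choquet V (ξ ∘ F)) := by
  refine ⟨?_, choquet_map V F ξ ▸ integral_le_choquet (hV.map hF) hQV hξ hM⟩
  calc choquet v (ξ ∘ F) = choquet (conjCap V) (ξ ∘ F) :=
        choquet_congr fun t => hv _ (measurableSet_le measurable_const (hξ.comp hF))
    _ ≤ ∫ x, ξ x ∂Q := choquet_conjCap_le_integral (hV.map hF) hQV hξ hM

end ErgodicCapacity

section Shift

variable {α : Type*}

def shift (x : ℕ → α) : ℕ → α := fun n => x (n + 1)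

lemma measurable_shift [MeasurableSpace α] : Measurable (shift (α := α)) :=
  measurable_pi_lambda _ fun n => measurable_pi_apply (n + 1)

lemma shift_iterate_apply (k : ℕ) (x : ℕ → α) (n : ℕ) : shift^[k] x n = x (n + k) := by
  induction k generalizing x with
  | zero => rfl
  | succ k ih => rw [Function.iterate_succ_apply, ih]; simp [shift, add_assoc]

variable {Ω : Type*} [MeasurableSpace Ω] {μ : Set Ω → ℝ} {Y : ℕ → Ω → ℝ}

lemma StationaryCap.shift_cylinder (hstat : StationaryCap μ Y) {C : Set (ℕ → ℝ)}
    (hC : C ∈ measurableCylinders fun _ : ℕ => ℝ) :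
    μ ((fun ω n => Y n ω) ⁻¹' (shift ⁻¹' C)) = μ ((fun ω n => Y n ω) ⁻¹' C) := by
  obtain ⟨s, S, hS, rfl⟩ := (mem_measurableCylinders C).1 hC
  -- Read the coordinates in `s` off the block `(Y 0, …, Y k)`, `k = max s`.
  let r : (Fin (s.sup id + 1) → ℝ) → (s → ℝ) := fun y i =>
    y ⟨i, Nat.lt_succ_of_le (Finset.le_sup (f := id) i.2)⟩
  have hr : Measurable r := measurable_pi_lambda _ fun i => measurable_pi_apply _
  convert (hstat 0 _ (r ⁻¹' S) (hr hS)).symm using 2 <;> ext ω <;>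
    simp [r, cylinder, add_comm] <;> rfl

theorem StationaryCap.preservesCap_shift (hstat : StationaryCap μ Y) (hY : ∀ n, Measurable (Y n))
    (hb : ContBelow μ) (ha : ContAbove μ) :
    PreservesCap (fun C => μ ((fun ω n => Y n ω) ⁻¹' C)) shift := fun _ hA =>
  have hYm : Measurable fun ω n => Y n ω := measurable_pi_lambda _ hY
  isSetAlgebra_measurableCylinders.eq_of_contBelow_of_contAbove
    generateFrom_measurableCylinders.symm ((hb.map hYm).map measurable_shift)
    ((ha.map hYm).map measurable_shift) (hb.map hYm) (ha.map hYm)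
    (fun _ hC => hstat.shift_cylinder hC) hA

theorem StationaryCap.exists_shift_invariant_measure_le {𝒮 : Set (Set Ω → ℝ)}
    (hstat : StationaryCap μ Y) (hY : ∀ n, Measurable (Y n)) (h𝒮 : 𝒮.Nonempty)
    (hP : ∀ P ∈ 𝒮, IsFinAddProb P) (hμ : UpperProbOf 𝒮 μ) (hb : ContBelow μ) (ha : ContAbove μ) :
    ∃ Q : Measure (ℕ → ℝ), IsProbabilityMeasure Q ∧ MeasurePreserving shift Q Q ∧
      ∀ A, MeasurableSet A → Q.real A ≤ μ ((fun ω n => Y n ω) ⁻¹' A) := by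
  have hYm : Measurable fun ω n => Y n ω := measurable_pi_lambda _ hY
  obtain ⟨P₀, hP₀⟩ := h𝒮
  exact exists_invariant_measure_le measurable_shift ((hP P₀ hP₀).map hYm)
    (fun A hA => hμ.le hP hP₀ (hYm hA)) (hstat.preservesCap_shift hY hb ha)
    ((ha.map hYm).contAtEmpty (hμ.isCapacity ⟨P₀, hP₀⟩ hP).1)

lemma exists_measurable_abs_le_eq_eval_zero (M : ℝ) :
    ∃ g : (ℕ → ℝ) → ℝ, Measurable g ∧ (∀ x, |g x| ≤ |M|) ∧ ∀ x, |x 0| ≤ M → g x = x 0 :=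
  have hM : -|M| ≤ |M| := neg_le_self (abs_nonneg M)
  ⟨fun x => projIcc (-|M|) |M| hM (x 0),
    (continuous_subtype_val.comp continuous_projIcc).measurable.comp (measurable_pi_apply 0),
    fun x => abs_le.2 (projIcc (-|M|) |M| hM (x 0)).2,
    fun x hx => by simp [projIcc_of_mem hM (abs_le.1 (hx.trans (le_abs_self M)))]⟩

end Shift

theorem stmt19_general {Ω : Type*} [MeasurableSpace Ω]
    (𝒮 : Set (Set Ω → ℝ)) (h𝒮 : 𝒮.Nonempty) (hP : ∀ P ∈ 𝒮, IsFinAddProb P)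
    (V v : Set Ω → ℝ) (hV : UpperProbOf 𝒮 V) (hv : LowerProbOf 𝒮 v)
    (hVb : ContBelow V) (hVa : ContAbove V)
    (Y : ℕ → Ω → ℝ) (hY : ∀ n, Measurable (Y n))
    (hbd : ∃ M : ℝ, ∀ (n : ℕ) (ω : Ω), |Y n ω| ≤ M)
    (hstat : StationaryCap V Y)
    (herg : ErgodicCap (fun C : Set (ℕ → ℝ) => V ((fun ω (n : ℕ) => Y n ω) ⁻¹' C))
      (fun (x : ℕ → ℝ) (n : ℕ) => x (n + 1))) :
    ∃ c : ℝ,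
      v {ω | Filter.Tendsto
        (fun n : ℕ => (1 / (n : ℝ)) * ∑ k ∈ Finset.range n, Y k ω)
        Filter.atTop (nhds c)} = 1 ∧
      ((∀ A B : Set Ω, MeasurableSet A → MeasurableSet B →
          V (A ∪ B) + V (A ∩ B) ≤ V A + V B) →
        choquet v (Y 0) ≤ c ∧ c ≤ choquet V (Y 0)) := by
  obtain ⟨M, hM⟩ := hbd
  obtain ⟨g, hg, hgM, hg0⟩ := exists_measurable_abs_le_eq_eval_zero M
  set Ym : Ω → ℕ → ℝ := fun ω n => Y n ω
  have hYm : Measurable Ym := measurable_pi_lambda _ hY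
  have hgY : ∀ k ω, g (shift^[k] (Ym ω)) = Y k ω := fun k ω => by
    rw [hg0 _ (by simpa [shift_iterate_apply] using hM k ω), shift_iterate_apply, zero_add]
  have hgY0 : g ∘ Ym = Y 0 := funext (hgY 0)
  obtain ⟨Q, hQ, hQT, hQW⟩ := hstat.exists_shift_invariant_measure_le hY h𝒮 hP hV hVb hVa
  refine ⟨∫ x, g x ∂Q, ?_, fun _ => hgY0 ▸ integral_mem_Icc_choquet_comp (hV.isCapacity h𝒮 hP)
    hYm (fun A hA => hv.eq_conjCap hV h𝒮 hP hA) hQW hg hgM⟩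
  have hconv : {ω | Tendsto (fun n : ℕ => (1 / (n : ℝ)) * ∑ k ∈ Finset.range n, Y k ω)
      atTop (𝓝 (∫ x, g x ∂Q))} =
      Ym ⁻¹' {x | Tendsto (birkhoffAverage ℝ shift g · x) atTop (𝓝 (∫ x, g x ∂Q))} := by
    ext ω
    simp [birkhoffAverage, birkhoffSum, hgY]
  have herg' : ErgodicCap (fun C => V (Ym ⁻¹' C)) shift := herg
  rw [hconv]
  refine hv.eq_one_of_compl hV h𝒮 hP
    (hYm (measurableSet_tendsto _ (measurable_birkhoffAverage measurable_shift hg))) ?_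
  rw [← preimage_compl, compl_ofPred]
  exact herg'.capacity_not_tendsto_birkhoffAverage_eq_zero hQT hQW hg hgM

theorem stmt19 {Ω : Type*} [MeasurableSpace Ω]
    (𝒮 : Set (Set Ω → ℝ)) (h𝒮 : 𝒮.Nonempty) (hP : ∀ P ∈ 𝒮, IsFinAddProb P)
    (V v : Set Ω → ℝ) (hV : UpperProbOf 𝒮 V) (hv : LowerProbOf 𝒮 v)
    (hVb : ContBelow V) (hVa : ContAbove V) (hvb : ContBelow v) (hva : ContAbove v)
    (Y : ℕ → Ω → ℝ) (hY : ∀ n, Measurable (Y n))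
    (hbd : ∃ M : ℝ, ∀ (n : ℕ) (ω : Ω), |Y n ω| ≤ M)
    (hstat : StationaryCap V Y)
    (herg : ErgodicCap (fun C : Set (ℕ → ℝ) => V ((fun ω (n : ℕ) => Y n ω) ⁻¹' C))
      (fun (x : ℕ → ℝ) (n : ℕ) => x (n + 1))) :
    ∃ c : ℝ,
      v {ω | Filter.Tendsto
        (fun n : ℕ => (1 / (n : ℝ)) * ∑ k ∈ Finset.range n, Y k ω)
        Filter.atTop (nhds c)} = 1 ∧
      ((∀ A B : Set Ω, MeasurableSet A → MeasurableSet B →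
          V (A ∪ B) + V (A ∩ B) ≤ V A + V B) →
        choquet v (Y 0) ≤ c ∧ c ≤ choquet V (Y 0)) :=
  stmt19_general 𝒮 h𝒮 hP V v hV hv hVb hVa Y hY hbd hstat herg
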